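/- For real numbers a, b, c, d, e ≥ 0 define, in ℝ⁵ with coordinates (u₁,…,u₅): P₁ := {u : 0 ≤ u₁ ≤ a, u₂ = u₃ = u₄ = u₅ = 0}; P₂ := {u : uᵢ ≥ 0, u₄ = u₅ = 0, u₁ ≤ b, u₃ ≤ c, u₁+u₃ ≤ b+c, u₁+u₂+u₃ ≤ b+c}; P₃ := {u : uᵢ ≥ 0, u₁ ≤ d, u₃ ≤ e, u₃+u₅ ≤ e, u₁+u₃ ≤ d+e, u₁+u₂+u₃ ≤ d+e, u₁+u₃+u₅ ≤ d+e, u₁+u₂+u₃+u₅ ≤ d+e, u₁+u₂+u₄+u₅ ≤ d+e}. (These are the FFLV polytopes P₁(0,a), P₂(0,b,b+c) and P₃(0,d,d+e,d+e) embedded in ℝ⁵.) Then the Minkowski sum P₁ + P₂ + P₃ equals the polytope Δ₅(a,b,c,d,e) := {u ∈ ℝ⁵ : u₁,…,u₅ ≥ 0; u₁ ≤ a+b+d; u₅ ≤ e; u₃+u₅ ≤ c+e; u₄+u₅ ≤ d+e; u₁+u₄+u₅ ≤ a+b+d+e; u₂+u₃+u₅ ≤ b+c+d+e; u₂+u₄+u₅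 ≤ b+c+d+e; u₁+u₂+u₃+u₅ ≤ a+b+c+d+e; u₁+u₂+u₄+u₅ ≤ a+b+c+d+e; u₂+u₃+u₄+2u₅ ≤ b+c+d+2e; u₁+u₂+u₃+u₄+2u₅ ≤ a+b+c+d+2e}. -/

import Mathlib

open Pointwise

/-- The FFLV polytope `P₁(0,a)` embedded in `ℝ⁵` (coordinates `u₁,…,u₅` are `u 0,…,u 4`). -/
def FFLV1 (a : ℝ) : Set (Fin 5 → ℝ) :=
  {u | 0 ≤ u 0 ∧ u 0 ≤ a ∧ u 1 = 0 ∧ u 2 = 0 ∧ u 3 = 0 ∧ u 4 = 0}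

/-- The FFLV polytope `P₂(0,b,b+c)` embedded in `ℝ⁵`. -/
def FFLV2 (b c : ℝ) : Set (Fin 5 → ℝ) :=
  {u | (∀ i, 0 ≤ u i) ∧ u 3 = 0 ∧ u 4 = 0 ∧ u 0 ≤ b ∧ u 2 ≤ c ∧ u 0 + u 2 ≤ b + c ∧
    u 0 + u 1 + u 2 ≤ b + c}

/-- The FFLV polytope `P₃(0,d,d+e,d+e)` embedded in `ℝ⁵`. -/
def FFLV3 (d e : ℝ) : Set (Fin 5 → ℝ) :=
  {u | (∀ i, 0 ≤ u i) ∧ u 0 ≤ d ∧ u 2 ≤ e ∧ u 2 + u 4 ≤ e ∧ u 0 + u 2 ≤ d + e ∧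
    u 0 + u 1 + u 2 ≤ d + e ∧ u 0 + u 2 + u 4 ≤ d + e ∧ u 0 + u 1 + u 2 + u 4 ≤ d + e ∧
    u 0 + u 1 + u 3 + u 4 ≤ d + e}

/-- The polytope `Δ₅(a,b,c,d,e) ⊂ ℝ⁵`. -/
def Delta5 (a b c d e : ℝ) : Set (Fin 5 → ℝ) :=
  {u | (∀ i, 0 ≤ u i) ∧ u 0 ≤ a + b + d ∧ u 4 ≤ e ∧ u 2 + u 4 ≤ c + e ∧
    u 3 + u 4 ≤ d + e ∧ u 0 + u 3 + u 4 ≤ a + b + d + e ∧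
    u 1 + u 2 + u 4 ≤ b + c + d + e ∧ u 1 + u 3 + u 4 ≤ b + c + d + e ∧
    u 0 + u 1 + u 2 + u 4 ≤ a + b + c + d + e ∧
    u 0 + u 1 + u 3 + u 4 ≤ a + b + c + d + e ∧
    u 1 + u 2 + u 3 + 2 * u 4 ≤ b + c + d + 2 * e ∧
    u 0 + u 1 + u 2 + u 3 + 2 * u 4 ≤ a + b + c + d + 2 * e}

/-!
`P₁(0,a)` is the segment `[0,a]` on the first axis, and `Δ₅(a,b,c,d,e) = P₁(0,a) + Δ₅(0,b,c,d,e)`: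
split off `min (u 0) a` from the first coordinate. It remains to show
`P₂(0,b,b+c) + P₃(0,d,d+e,d+e) = Δ₅(0,b,c,d,e)`; one inclusion adds up defining inequalities.
For the other, take the `P₃`-part `z` of `u` greedily: `z 3 = u 3`, `z 4 = u 4`, and `z 0`, `z 2`,
`z 1` (in this order) as large as the `P₃` inequalities allow, i.e. as minima. Each `P₂` inequality
for `u - z` is then a lower bound on such a minimum, hence a conjunction of inequalities of `Δ₅`.
-/

section

variable {a b c d e : ℝ}

theorem FFLV1_nonneg {x : Fin 5 → ℝ} (hx : x ∈ FFLV1 a) : 0 ≤ x := by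
  obtain ⟨h₀, -, h₁, h₂, h₃, h₄⟩ := hx
  intro i
  fin_cases i <;> simp [h₀, h₁, h₂, h₃, h₄]

theorem FFLV1_add_Delta5_zero_subset : FFLV1 a + Delta5 0 b c d e ⊆ Delta5 a b c d e := by
  rw [Set.add_subset_iff]
  rintro x hx w ⟨hw, h₁, h₂, h₃, h₄, h₅, h₆, h₇, h₈, h₉, h₁₀, h₁₁⟩
  refine ⟨add_nonneg (FFLV1_nonneg hx) hw, ?_⟩
  obtain ⟨-, hxa, hx₁, hx₂, hx₃, hx₄⟩ := hx
  simp only [Pi.add_apply, hx₁, hx₂, hx₃, hx₄, zero_add]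
  exact ⟨by linarith, h₂, h₃, h₄, by linarith, h₆, h₇, by linarith, by linarith, h₁₀, by linarith⟩

theorem Delta5_subset_FFLV1_add_Delta5_zero (ha : 0 ≤ a) (hb : 0 ≤ b) (hd : 0 ≤ d) :
    Delta5 a b c d e ⊆ FFLV1 a + Delta5 0 b c d e := by
  rintro u ⟨hu, h₁, h₂, h₃, h₄, h₅, h₆, h₇, h₈, h₉, h₁₀, h₁₁⟩
  set x : Fin 5 → ℝ := ![min (u 0) a, 0, 0, 0, 0]
  have hxu : x ≤ u := by
    intro i
    fin_cases i <;> simp [x, hu _]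
  refine ⟨x, ⟨le_min (hu 0) ha, min_le_right _ _, rfl, rfl, rfl, rfl⟩, u - x,
    ⟨sub_nonneg.2 hxu, ?_⟩, add_sub_cancel x u⟩
  simp only [x, Pi.sub_apply, Matrix.cons_val, sub_zero, zero_add]
  obtain ⟨hm, -⟩ | ⟨hm, -⟩ := min_cases (u 0) a <;> rw [hm] <;>
    exact ⟨by linarith, h₂, h₃, h₄, by linarith, h₆, h₇, by linarith, by linarith, h₁₀, by linarith⟩

theorem FFLV1_add_Delta5_zero (ha : 0 ≤ a) (hb : 0 ≤ b) (hd : 0 ≤ d) :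
    FFLV1 a + Delta5 0 b c d e = Delta5 a b c d e :=
  FFLV1_add_Delta5_zero_subset.antisymm (Delta5_subset_FFLV1_add_Delta5_zero ha hb hd)

theorem FFLV2_add_FFLV3_subset : FFLV2 b c + FFLV3 d e ⊆ Delta5 0 b c d e := by
  rw [Set.add_subset_iff]
  rintro y ⟨hy, hy₃, hy₄, hy₀, hy₂, -, hy₀₁₂⟩ z ⟨hz, hz₀, -, hz₂₄, -, -, -, hz₀₁₂₄, hz₀₁₃₄⟩
  refine ⟨fun i ↦ add_nonneg (hy i) (hz i), ?_⟩
  simp only [Pi.add_apply, hy₃, hy₄, zero_add]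
  refine ⟨?_, ?_, ?_, ?_, ?_, ?_, ?_, ?_, ?_, ?_, ?_⟩ <;>
    linarith [hy 0, hy 1, hy 2, hz 0, hz 1, hz 2]

theorem Delta5_zero_subset_FFLV2_add_FFLV3 (hb : 0 ≤ b) (hc : 0 ≤ c) (hd : 0 ≤ d) :
    Delta5 0 b c d e ⊆ FFLV2 b c + FFLV3 d e := by
  rintro u ⟨hu, h₁, h₂, h₃, h₄, h₅, h₆, h₇, h₈, h₉, h₁₀, h₁₁⟩
  set z₀ := min (u 0) (min d (d + e - u 3 - u 4))
  set z₂ := min (u 2) (e - u 4)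
  set z₁ := min (u 1) (min (d + e - u 3 - u 4 - z₀) (d + e - u 4 - z₂ - z₀))
  obtain ⟨hz₀u, hz₀d, hz₀de⟩ : z₀ ≤ u 0 ∧ z₀ ≤ d ∧ z₀ ≤ d + e - u 3 - u 4 := by simp [z₀]
  obtain ⟨hz₂u, hz₂e⟩ : z₂ ≤ u 2 ∧ z₂ ≤ e - u 4 := by simp [z₂]
  obtain ⟨hz₁u, hz₁de, hz₁de₂⟩ :
      z₁ ≤ u 1 ∧ z₁ ≤ d + e - u 3 - u 4 - z₀ ∧ z₁ ≤ d + e - u 4 - z₂ - z₀ := by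
    simp [z₁]
  have hz₀ : 0 ≤ z₀ := le_min (hu 0) (le_min hd (by linarith))
  have hz₂ : 0 ≤ z₂ := le_min (hu 2) (by linarith)
  have hz₁ : 0 ≤ z₁ := le_min (hu 1) (le_min (by linarith) (by linarith))
  have hy₀ : u 0 - b ≤ z₀ := le_min (by linarith) (le_min (by linarith) (by linarith))
  have hy₂ : u 2 - c ≤ z₂ := le_min (by linarith) (by linarith)
  have hy₀₁₂ : u 0 + u 1 + u 2 - b - c - z₀ - z₂ ≤ z₁ := by
    refine le_min (by linarith) (le_min ?_ (by linarith))
    have : u 0 + u 1 + u 2 + u 3 + u 4 - b - c - d - e ≤ z₂ :=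
      le_min (by linarith) (by linarith)
    linarith
  set z : Fin 5 → ℝ := ![z₀, z₁, z₂, u 3, u 4]
  have hzu : z ≤ u := by
    intro i
    fin_cases i <;> simp [z, hz₀u, hz₁u, hz₂u]
  refine ⟨u - z, ⟨sub_nonneg.2 hzu, ?_⟩, z, ⟨?_, ?_⟩, sub_add_cancel u z⟩
  · simp only [z, Pi.sub_apply, Matrix.cons_val, sub_self, true_and]
    refine ⟨?_, ?_, ?_, ?_⟩ <;> linarith
  · intro i
    fin_cases i <;> simp [z, hz₀, hz₁, hz₂, hu 3, hu 4]
  · simp only [z, Matrix.cons_val]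
    refine ⟨?_, ?_, ?_, ?_, ?_, ?_, ?_, ?_⟩ <;> linarith [hu 4]

theorem FFLV2_add_FFLV3 (hb : 0 ≤ b) (hc : 0 ≤ c) (hd : 0 ≤ d) :
    FFLV2 b c + FFLV3 d e = Delta5 0 b c d e :=
  FFLV2_add_FFLV3_subset.antisymm (Delta5_zero_subset_FFLV2_add_FFLV3 hb hc hd)

end

theorem FFLV_minkowski_sum_eq_Delta5_general (a b c d e : ℝ)
    (ha : 0 ≤ a) (hb : 0 ≤ b) (hc : 0 ≤ c) (hd : 0 ≤ d) :
    FFLV1 a + FFLV2 b c + FFLV3 d e = Delta5 a b c d e := by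
  rw [add_assoc, FFLV2_add_FFLV3 hb hc hd, FFLV1_add_Delta5_zero ha hb hd]

/-- The Minkowski sum of the FFLV polytopes `P₁(0,a)`, `P₂(0,b,b+c)` and
`P₃(0,d,d+e,d+e)` equals `Δ₅(a,b,c,d,e)`. -/
theorem FFLV_minkowski_sum_eq_Delta5 (a b c d e : ℝ)
    (ha : 0 ≤ a) (hb : 0 ≤ b) (hc : 0 ≤ c) (hd : 0 ≤ d) (he : 0 ≤ e) :
    FFLV1 a + FFLV2 b c + FFLV3 d e = Delta5 a b c d e :=
  FFLV_minkowski_sum_eq_Delta5_general a b c d e ha hb hc hd
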